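/- If an extended open graph (G, I, O, λ) has a gflow and Y ∈ λ(u) for every u ∈ Iᶜ ∩ Oᶜ, then (G, I, O, λ) has a Y-NF gflow, i.e., a gflow g with (g(u) △ Odd(g(u))) ⊆ {u} ∪ O for all u ∈ Oᶜ. -/
import Mathlib

open scoped symmDiff

inductive Pauli | X | Y | Z
deriving DecidableEq

inductive MPlane | XY | XZ | YZ
deriving DecidableEq

/-- The set of Pauli operators defining a measurement plane. -/
def MPlane.paulis : MPlane → Finset Pauli
  | .XY => {.X, .Y}
  | .XZ => {.X, .Z}
  | .YZ => {.Y, .Z}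

variable {V : Type} [Fintype V] [DecidableEq V]

/-- Odd neighbourhood: vertices with an odd number of neighbours in `A`. -/
def oddNbhd (G : SimpleGraph V) [DecidableRel G.Adj] (A : Finset V) : Finset V :=
  Finset.univ.filter fun w => Odd (A.filter (G.Adj w)).card

/-- `f` is extensive w.r.t. the strict order `r`. -/
def IsExtensive (O : Finset V) (r : V → V → Prop) (f : V → Finset V) : Prop :=
  ∀ u ∉ O, ∀ v ∈ f u, v ≠ u → r u v

/-- gflow of an extended open graph `(G, I, O, lam)`. -/
def IsGflow (G : SimpleGraph V) [DecidableRel G.Adj]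
    (I O : Finset V) (lam : V → MPlane) (g : V → Finset V) : Prop :=
  (∀ u ∉ O, g u ⊆ Iᶜ) ∧
  (∃ r : V → V → Prop, IsStrictOrder V r ∧
    IsExtensive O r (fun u => g u ∪ oddNbhd G (g u))) ∧
  ∀ u ∉ O,
    (lam u = .XY → u ∈ oddNbhd G (g u) ∧ u ∉ g u) ∧
    (lam u = .XZ → u ∈ g u ∧ u ∈ oddNbhd G (g u)) ∧
    (lam u = .YZ → u ∈ g u ∧ u ∉ oddNbhd G (g u))

/-- σ-normal forms for gflows. -/
def IsNF (σ : Pauli) (G : SimpleGraph V) [DecidableRel G.Adj]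
    (O : Finset V) (g : V → Finset V) : Prop :=
  match σ with
  | .X => ∀ u ∉ O, oddNbhd G (g u) ⊆ insert u O
  | .Y => ∀ u ∉ O, (g u ∆ oddNbhd G (g u)) ⊆ insert u O
  | .Z => ∀ u ∉ O, g u ⊆ insert u O

namespace YNFAux

lemma odd_card_symmDiff (s t : Finset V) :
    Odd (s ∆ t).card ↔ ¬ (Odd s.card ↔ Odd t.card) := by
  have h0 : s ∩ t ⊆ s ∪ t := (Finset.inter_subset_left).trans Finset.subset_union_left
  have h1 : (s ∆ t).card = (s ∪ t).card - (s ∩ t).card := by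
    rw [symmDiff_eq_sup_sdiff_inf]; exact Finset.card_sdiff_of_subset h0
  have h2 : (s ∪ t).card + (s ∩ t).card = s.card + t.card :=
    Finset.card_union_add_card_inter s t
  have h3 := Finset.card_le_card h0
  simp only [Nat.odd_iff] at *
  omega

lemma oddNbhd_symmDiff (G : SimpleGraph V) [DecidableRel G.Adj] (A B : Finset V) :
    oddNbhd G (A ∆ B) = oddNbhd G A ∆ oddNbhd G B := by
  ext w
  have hfilt : (A ∆ B).filter (G.Adj w) = A.filter (G.Adj w) ∆ B.filter (G.Adj w) := by
    ext x
    simp only [Finset.mem_filter, Finset.mem_symmDiff]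
    tauto
  simp only [oddNbhd, Finset.mem_symmDiff, Finset.mem_filter, Finset.mem_univ, true_and,
    hfilt, odd_card_symmDiff]
  tauto

/-- The "bad set" of a vertex. -/
def B (G : SimpleGraph V) [DecidableRel G.Adj] (O : Finset V) (g : V → Finset V) (u : V) :
    Finset V :=
  (g u ∆ oddNbhd G (g u)) \ insert u O

lemma main_induction (G : SimpleGraph V) [DecidableRel G.Adj]
    (I O : Finset V) (lam : V → MPlane) (ρ : V → ℕ)
    (hplane : ∀ u, u ∉ I → u ∉ O → Pauli.Y ∈ (lam u).paulis) :
    ∀ n (g : V → Finset V),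
      (∀ u ∉ O, g u ⊆ Iᶜ) →
      (∀ u ∉ O, ∀ v ∈ g u ∪ oddNbhd G (g u), v ≠ u → ρ u < ρ v) →
      (∀ u ∉ O,
        (lam u = .XY → u ∈ oddNbhd G (g u) ∧ u ∉ g u) ∧
        (lam u = .XZ → u ∈ g u ∧ u ∈ oddNbhd G (g u)) ∧
        (lam u = .YZ → u ∈ g u ∧ u ∉ oddNbhd G (g u))) →
      (∑ u ∈ Finset.univ.filter (· ∉ O), (B G O g u).card) ≤ n →
      ∃ g' : V → Finset V, IsGflow G I O lam g' ∧ IsNF .Y G O g' := by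
  intro n
  induction n with
  | zero =>
    intro g hC1 hC2 hC3 hsum
    have hirr : IsIrrefl V (fun a b => ρ a < ρ b) := ⟨fun a => lt_irrefl _⟩
    have htr : IsTrans V (fun a b => ρ a < ρ b) := ⟨fun a b c => lt_trans⟩
    refine ⟨g, ⟨hC1, ⟨fun a b => ρ a < ρ b, @IsStrictOrder.mk _ _ hirr htr,
      fun u hu v hv hvu => hC2 u hu v hv hvu⟩, hC3⟩, ?_⟩
    intro u hu
    have : (B G O g u).card = 0 := by
      have := Finset.sum_eq_zero_iff.mp (Nat.le_zero.mp hsum)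
      exact this u (by simp [hu])
    rw [Finset.card_eq_zero] at this
    intro x hx
    by_contra hxO
    have : x ∈ B G O g u := Finset.mem_sdiff.mpr ⟨hx, hxO⟩
    simp [‹B G O g u = ∅›] at this
  | succ n ih =>
    intro g hC1 hC2 hC3 hsum
    by_cases hzero : (∑ u ∈ Finset.univ.filter (· ∉ O), (B G O g u).card) = 0
    · exact ih g hC1 hC2 hC3 (by omega)
    -- pick u with B nonempty maximizing ρ
    have hTne : (Finset.univ.filter (fun u => u ∉ O ∧ (B G O g u).Nonempty)).Nonempty := by
      by_contra hc
      apply hzero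
      rw [Finset.not_nonempty_iff_eq_empty] at hc
      apply Finset.sum_eq_zero
      intro u hu
      rw [Finset.card_eq_zero, ← Finset.not_nonempty_iff_eq_empty]
      intro hne
      have : u ∈ Finset.univ.filter (fun u => u ∉ O ∧ (B G O g u).Nonempty) := by
        simp only [Finset.mem_filter, Finset.mem_univ, true_and]
        exact ⟨(Finset.mem_filter.mp hu).2, hne⟩
      simp [hc] at this
    obtain ⟨u, huT, humax⟩ := Finset.exists_max_image _ ρ hTne
    simp only [Finset.mem_filter, Finset.mem_univ, true_and] at huT
    obtain ⟨huO, huB⟩ := huT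
    obtain ⟨v, hvB⟩ := huB
    have hvmem := Finset.mem_sdiff.mp hvB
    have hvO : v ∉ O := fun hc => hvmem.2 (Finset.mem_insert_of_mem hc)
    have hvu : v ≠ u := fun hc => hvmem.2 (hc ▸ Finset.mem_insert_self u O)
    have hvf : v ∈ g u ∪ oddNbhd G (g u) := by
      rcases Finset.mem_symmDiff.mp hvmem.1 with ⟨h1, _⟩ | ⟨h1, _⟩
      · exact Finset.mem_union_left _ h1
      · exact Finset.mem_union_right _ h1
    have hρuv : ρ u < ρ v := hC2 u huO v hvf hvu
    -- v is focused
    have hBv : B G O g v = ∅ := by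
      rw [← Finset.not_nonempty_iff_eq_empty]
      intro hne
      have : v ∈ Finset.univ.filter (fun u => u ∉ O ∧ (B G O g u).Nonempty) := by
        simp only [Finset.mem_filter, Finset.mem_univ, true_and]; exact ⟨hvO, hne⟩
      have := humax v this
      omega
    have hfoc : g v ∆ oddNbhd G (g v) ⊆ insert v O := by
      intro x hx
      by_contra hc
      have : x ∈ B G O g v := Finset.mem_sdiff.mpr ⟨hx, hc⟩
      simp [hBv] at this
    -- v is in its own symmetric difference
    have hvself : v ∈ g v ∆ oddNbhd G (g v) := by
      obtain ⟨hXY, hXZ, hYZ⟩ := hC3 v hvO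
      rcases hlam : lam v with _ | _ | _
      · obtain ⟨h1, h2⟩ := hXY hlam
        exact Finset.mem_symmDiff.mpr (Or.inr ⟨h1, h2⟩)
      · obtain ⟨h1, h2⟩ := hXZ hlam
        have hvI : v ∉ I := by
          have := hC1 v hvO h1; simpa using this
        have := hplane v hvI hvO
        rw [hlam] at this
        simp [MPlane.paulis] at this
      · obtain ⟨h1, h2⟩ := hYZ hlam
        exact Finset.mem_symmDiff.mpr (Or.inl ⟨h1, h2⟩)
    -- u is not touched by g v
    have huf : u ∉ g v ∪ oddNbhd G (g v) := by
      intro hc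
      have := hC2 v hvO u hc (Ne.symm hvu)
      omega
    have hugv : u ∉ g v := fun hc => huf (Finset.mem_union_left _ hc)
    have huov : u ∉ oddNbhd G (g v) := fun hc => huf (Finset.mem_union_right _ hc)
    -- new g
    set g' : V → Finset V := Function.update g u (g u ∆ g v) with hg'
    have hg'u : g' u = g u ∆ g v := Function.update_self u _ g
    have hg'w : ∀ w, w ≠ u → g' w = g w := fun w hw => Function.update_of_ne hw _ g
    have hodd' : oddNbhd G (g' u) = oddNbhd G (g u) ∆ oddNbhd G (g v) := by
      rw [hg'u, oddNbhd_symmDiff]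
    have hsym' : g' u ∆ oddNbhd G (g' u)
        = (g u ∆ oddNbhd G (g u)) ∆ (g v ∆ oddNbhd G (g v)) := by
      rw [hodd', hg'u, symmDiff_symmDiff_symmDiff_comm]
    -- conditions for g'
    have hC1' : ∀ w ∉ O, g' w ⊆ Iᶜ := by
      intro w hw
      by_cases hwu : w = u
      · subst hwu; rw [hg'u]
        exact symmDiff_le_sup.trans (Finset.union_subset (hC1 w huO) (hC1 v hvO))
      · rw [hg'w w hwu]; exact hC1 w hw
    have hC2' : ∀ w ∉ O, ∀ x ∈ g' w ∪ oddNbhd G (g' w), x ≠ w → ρ w < ρ x := by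
      intro w hw x hx hxw
      by_cases hwu : w = u
      · subst hwu
        rw [hodd', hg'u] at hx
        have : x ∈ (g w ∪ oddNbhd G (g w)) ∪ (g v ∪ oddNbhd G (g v)) := by
          rcases Finset.mem_union.mp hx with h | h
          · rcases Finset.mem_symmDiff.mp h with ⟨h1, _⟩ | ⟨h1, _⟩
            · exact Finset.mem_union_left _ (Finset.mem_union_left _ h1)
            · exact Finset.mem_union_right _ (Finset.mem_union_left _ h1)
          · rcases Finset.mem_symmDiff.mp h with ⟨h1, _⟩ | ⟨h1, _⟩
            · exact Finset.mem_union_left _ (Finset.mem_union_right _ h1)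
            · exact Finset.mem_union_right _ (Finset.mem_union_right _ h1)
        rcases Finset.mem_union.mp this with h | h
        · exact hC2 w huO x h hxw
        · by_cases hxv : x = v
          · subst hxv; exact hρuv
          · exact lt_trans hρuv (hC2 v hvO x h hxv)
      · rw [hg'w w hwu] at hx; exact hC2 w hw x hx hxw
    have hC3' : ∀ w ∉ O,
        (lam w = .XY → w ∈ oddNbhd G (g' w) ∧ w ∉ g' w) ∧
        (lam w = .XZ → w ∈ g' w ∧ w ∈ oddNbhd G (g' w)) ∧
        (lam w = .YZ → w ∈ g' w ∧ w ∉ oddNbhd G (g' w)) := by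
      intro w hw
      by_cases hwu : w = u
      · subst hwu
        have e1 : (w ∈ g' w) ↔ (w ∈ g w) := by
          rw [hg'u, Finset.mem_symmDiff]; tauto
        have e2 : (w ∈ oddNbhd G (g' w)) ↔ (w ∈ oddNbhd G (g w)) := by
          rw [hodd', Finset.mem_symmDiff]; tauto
        obtain ⟨hXY, hXZ, hYZ⟩ := hC3 w huO
        refine ⟨fun hl => ?_, fun hl => ?_, fun hl => ?_⟩
        · obtain ⟨a, b⟩ := hXY hl; exact ⟨e2.mpr a, fun hc => b (e1.mp hc)⟩
        · obtain ⟨a, b⟩ := hXZ hl; exact ⟨e1.mpr a, e2.mpr b⟩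
        · obtain ⟨a, b⟩ := hYZ hl; exact ⟨e1.mpr a, fun hc => b (e2.mp hc)⟩
      · rw [hg'w w hwu]; exact hC3 w hw
    -- sum decreases
    have hBsub : B G O g' u ⊆ (B G O g u).erase v := by
      intro x hx
      obtain ⟨hx1, hx2⟩ := Finset.mem_sdiff.mp hx
      rw [hsym'] at hx1
      have hxO : x ∉ O := fun hc => hx2 (Finset.mem_insert_of_mem hc)
      rcases Finset.mem_symmDiff.mp hx1 with ⟨h1, h2⟩ | ⟨h1, h2⟩
      · have hxv : x ≠ v := fun hc => h2 (hc ▸ hvself)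
        exact Finset.mem_erase.mpr ⟨hxv, Finset.mem_sdiff.mpr ⟨h1, hx2⟩⟩
      · rcases Finset.mem_insert.mp (hfoc h1) with hc | hc
        · exact absurd (hc ▸ hvmem.1) h2
        · exact absurd hc hxO
    have hcard : (B G O g' u).card < (B G O g u).card := by
      calc (B G O g' u).card ≤ ((B G O g u).erase v).card := Finset.card_le_card hBsub
        _ < (B G O g u).card := Finset.card_erase_lt_of_mem hvB
    have hsum' : (∑ w ∈ Finset.univ.filter (· ∉ O), (B G O g' w).card) ≤ n := by
      have hlt : (∑ w ∈ Finset.univ.filter (· ∉ O), (B G O g' w).card)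
          < ∑ w ∈ Finset.univ.filter (· ∉ O), (B G O g w).card := by
        apply Finset.sum_lt_sum
        · intro w hw
          by_cases hwu : w = u
          · subst hwu; exact le_of_lt hcard
          · simp [B, hg'w w hwu]
        · exact ⟨u, by simp [huO], hcard⟩
      omega
    exact ih g' hC1' hC2' hC3' hsum'

end YNFAux

/-- Theorem 1 for σ = Y: if every non-input non-output measurement plane contains Y,
then a gflow can be put into Y-normal form. -/
theorem exists_YNF_gflow (G : SimpleGraph V) [DecidableRel G.Adj]
    (I O : Finset V) (lam : V → MPlane)
    (h : ∃ g : V → Finset V, IsGflow G I O lam g)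
    (hplane : ∀ u, u ∉ I → u ∉ O → Pauli.Y ∈ (lam u).paulis) :
    ∃ g : V → Finset V, IsGflow G I O lam g ∧ IsNF .Y G O g := by
  classical
  obtain ⟨g, hC1, ⟨r, hr, hext⟩, hC3⟩ := h
  haveI := hr
  set ρ : V → ℕ := fun a => (Finset.univ.filter (fun w => r w a)).card with hρ
  have hmono : ∀ a b, r a b → ρ a < ρ b := by
    intro a b hab
    apply Finset.card_lt_card
    rw [Finset.ssubset_iff_of_subset]
    · exact ⟨a, by simp [hab], by simp [irrefl a]⟩
    · intro w hw
      simp only [Finset.mem_filter, Finset.mem_univ, true_and] at *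
      exact Trans.trans hw hab
  exact YNFAux.main_induction G I O lam ρ hplane
    (∑ u ∈ Finset.univ.filter (· ∉ O), (YNFAux.B G O g u).card) g hC1
    (fun u hu v hv hvu => hmono u v (hext u hu v hv hvu)) hC3 le_rfl
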